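/- Invariant 1 part (c) for the generic algorithm: for every reachable configuration of Algorithm GQME and every process p, if p is not in the queue of M, then p is in phase NEAR_NCS and Wait[p] = true. -/

import Mathlib

/-- The phase of a process in Algorithm GQME. -/
inductive GPhase
  | nearNCS   -- after dequeue, before the next enqueue (includes the NCS)
  | doorway   -- between enqueue and isHead
  | wait
  | doneWait
  | noWait    -- after isHead returned true, before dequeue
deriving DecidableEq

/-- A configuration of Algorithm GQME: the state (Q, V) of the atomic MutexQueue M,
the Wait registers, the phase of each process, and the number of passages each process
has started (incremented at its enqueue). -/
structure GConfig (N : ℕ) where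
  Q : List (Fin N)
  V : Finset (Fin N)
  Wait : Fin N → Bool
  phase : Fin N → GPhase
  pass : Fin N → ℕ

/-- Initially the queue is empty, all Wait registers are true, all processes are in
NEAR_NCS, and no passages have been started. -/
def gInit (N : ℕ) : GConfig N :=
  ⟨[], ∅, fun _ => true, fun _ => GPhase.nearNCS, fun _ => 0⟩

/-- Events (shared-memory steps) of Algorithm GQME. -/
inductive GEv (N : ℕ)
  | enq (p : Fin N)                       -- M.enqueue()               (line 2)
  | isHeadT (p : Fin N)                   -- M.isHead() returns true   (line 3)
  | isHeadF (p : Fin N)                   -- M.isHead() returns false  (line 3)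
  | exitWait (p : Fin N)
  | deq (p : Fin N) (r : Option (Fin N))
deriving DecidableEq

/-- The transition relation of Algorithm GQME, following the pseudocode and the
(non-broken) MutexQueue transition function. -/
inductive GStep (N : ℕ) : GConfig N → GEv N → GConfig N → Prop
  | enq (c : GConfig N) (p : Fin N) :
      c.phase p = GPhase.nearNCS → p ∉ c.Q →
      GStep N c (GEv.enq p)
        { c with Q := c.Q ++ [p],
                 phase := Function.update c.phase p GPhase.doorway,
                 pass := Function.update c.pass p (c.pass p + 1) }
  | isHeadT (c : GConfig N) (p : Fin N) :
      c.phase p = GPhase.doorway → p ∈ c.Q → p ∉ c.V → c.Q.head? = some p →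
      GStep N c (GEv.isHeadT p)
        { c with V := insert p c.V,
                 phase := Function.update c.phase p GPhase.noWait }
  | isHeadF (c : GConfig N) (p : Fin N) :
      c.phase p = GPhase.doorway → p ∈ c.Q → p ∉ c.V → c.Q.head? ≠ some p →
      GStep N c (GEv.isHeadF p)
        { c with V := insert p c.V,
                 phase := Function.update c.phase p GPhase.wait }
  | exitWait (c : GConfig N) (p : Fin N) :
      c.phase p = GPhase.wait → c.Wait p = false →
      GStep N c (GEv.exitWait p)
        { c with Wait := Function.update c.Wait p true,
                 phase := Function.update c.phase p GPhase.doneWait }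
  | deq (c : GConfig N) (p : Fin N) (r : Option (Fin N)) :
      (c.phase p = GPhase.noWait ∨ c.phase p = GPhase.doneWait) →
      c.Q.head? = some p → p ∈ c.V →
      r = (match c.Q[1]? with
           | some q => if q ∈ c.V then some q else none
           | none => none) →
      GStep N c (GEv.deq p r)
        { c with Q := c.Q.tail, V := c.V.erase p,
                 Wait := (match r with
                          | some q => Function.update c.Wait q false
                          | none => c.Wait),
                 phase := Function.update c.phase p GPhase.nearNCS }

/-- `GReaches N c H c'`: the history H of events leads from configuration c to c'. -/
inductive GReaches (N : ℕ) : GConfig N → List (GEv N) → GConfig N → Prop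
  | nil (c : GConfig N) : GReaches N c [] c
  | cons {c c1 c2 : GConfig N} {e : GEv N} {l : List (GEv N)} :
      GStep N c e c1 → GReaches N c1 l c2 → GReaches N c (e :: l) c2

/-- A process is in the critical section iff it is between line 3/5 and line 7. -/
def inCS {N : ℕ} (c : GConfig N) (p : Fin N) : Prop :=
  c.phase p = GPhase.noWait ∨ c.phase p = GPhase.doneWait

/-! A process leaves the queue only by dequeuing, which returns it to NEAR_NCS, so what has to be
controlled are the Wait registers. A dequeue clears the register of the second process of the
queue, and only when that process is in V, i.e. past its isHead call; as only the head can be in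
the critical section, that process is in WAIT, and it is the new head. So a cleared register
always belongs to the head, in WAIT, and the dequeuing process, in the critical section, has
Wait = true. Together with a duplicate-free queue these facts form an inductive invariant. -/

structure GInv {N : ℕ} (c : GConfig N) : Prop where
  nodup : c.Q.Nodup
  of_not_mem_Q : ∀ p, p ∉ c.Q → c.phase p = GPhase.nearNCS ∧ c.Wait p = true
  head_of_inCS : ∀ p, inCS c p → c.Q.head? = some p
  of_wait_false : ∀ p, c.Wait p = false → c.Q.head? = some p ∧ c.phase p = GPhase.wait
  of_mem_V : ∀ p ∈ c.V, c.phase p = GPhase.wait ∨ inCS c p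

namespace GInv

variable {N : ℕ} {c c' : GConfig N} {p : Fin N}

theorem init (N : ℕ) : GInv (gInit N) where
  nodup := List.nodup_nil
  of_not_mem_Q _ _ := ⟨rfl, rfl⟩
  head_of_inCS _ h := by simp [inCS, gInit] at h
  of_wait_false _ h := by simp [gInit] at h
  of_mem_V _ h := by simp [gInit] at h

theorem wait_eq_true_of_ne_wait (hc : GInv c) (hp : c.phase p ≠ GPhase.wait) :
    c.Wait p = true :=
  Bool.not_eq_false _ ▸ fun hW => hp (hc.of_wait_false p hW).2

theorem wait_eq_true_of_inCS (hc : GInv c) (hp : inCS c p) (q : Fin N) : c.Wait q = true :=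
  Bool.not_eq_false _ ▸ fun hW => by
    obtain ⟨hqhead, hwait⟩ := hc.of_wait_false q hW
    rw [hc.head_of_inCS p hp, Option.some_inj] at hqhead
    simp [inCS, hqhead ▸ hwait] at hp

theorem phase_eq_wait_of_mem_V (hc : GInv c) {q : Fin N} (hq : q ∈ c.V)
    (hhead : c.Q.head? = some p) (hqp : q ≠ p) : c.phase q = GPhase.wait :=
  (hc.of_mem_V q hq).resolve_right fun hcs =>
    hqp (Option.some_inj.mp ((hc.head_of_inCS q hcs).symm.trans hhead))

theorem enq (hc : GInv c) (h : GStep N c (GEv.enq p) c') : GInv c' := by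
  cases h with | enq _ hph hpQ => ?_
  have hpV : p ∉ c.V := fun hp => by simpa [inCS, hph] using hc.of_mem_V p hp
  refine ⟨by simpa using hc.nodup.concat hpQ, fun q hq => ?_, fun q hq => ?_, fun q hq => ?_,
    fun q hq => ?_⟩
  · simp only [List.mem_append, List.mem_singleton, not_or] at hq
    simpa [Function.update_of_ne hq.2] using hc.of_not_mem_Q q hq.1
  · have hqp : q ≠ p := by rintro rfl; simp [inCS] at hq
    have := hc.head_of_inCS q (by simpa [inCS, Function.update_of_ne hqp] using hq)
    simp [List.head?_append, this]
  · obtain ⟨hhead, hwait⟩ := hc.of_wait_false q hq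
    have hqp : q ≠ p := by rintro rfl; simp [hph] at hwait
    simp [List.head?_append, hhead, Function.update_of_ne hqp, hwait]
  · have hqp : q ≠ p := by rintro rfl; exact hpV hq
    simpa [inCS, Function.update_of_ne hqp] using hc.of_mem_V q hq

theorem isHead (hc : GInv c) (hph : c.phase p = GPhase.doorway) (hpQ : p ∈ c.Q) (φ : GPhase)
    (hφ : φ = GPhase.wait ∨ φ = GPhase.noWait ∧ c.Q.head? = some p) :
    GInv { c with V := insert p c.V, phase := Function.update c.phase p φ } := by
  have hWp : c.Wait p = true := hc.wait_eq_true_of_ne_wait (by simp [hph])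
  refine ⟨hc.nodup, fun q hq => ?_, fun q hq => ?_, fun q hq => ?_, fun q hq => ?_⟩
  · have hqp : q ≠ p := by rintro rfl; exact hq hpQ
    simpa [Function.update_of_ne hqp] using hc.of_not_mem_Q q hq
  · by_cases hqp : q = p
    · subst hqp
      rcases hφ with rfl | ⟨rfl, hhead⟩
      · simp [inCS] at hq
      · exact hhead
    · exact hc.head_of_inCS q (by simpa [inCS, Function.update_of_ne hqp] using hq)
  · have hqp : q ≠ p := by rintro rfl; simp [hWp] at hq
    simpa [Function.update_of_ne hqp] using hc.of_wait_false q hq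
  · by_cases hqp : q = p
    · subst hqp
      rcases hφ with rfl | ⟨rfl, -⟩ <;> simp [inCS]
    · have hqV : q ∈ c.V := by simpa [hqp] using hq
      simpa [inCS, Function.update_of_ne hqp] using hc.of_mem_V q hqV

theorem exitWait (hc : GInv c) (h : GStep N c (GEv.exitWait p) c') : GInv c' := by
  cases h with | exitWait _ hph hW => ?_
  have hhead := (hc.of_wait_false p hW).1
  have hpQ : p ∈ c.Q := List.mem_of_mem_head? hhead
  refine ⟨hc.nodup, fun q hq => ?_, fun q hq => ?_, fun q hq => ?_, fun q hq => ?_⟩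
  · have hqp : q ≠ p := by rintro rfl; exact hq hpQ
    simpa [Function.update_of_ne hqp] using hc.of_not_mem_Q q hq
  · by_cases hqp : q = p
    · exact hqp ▸ hhead
    · exact hc.head_of_inCS q (by simpa [inCS, Function.update_of_ne hqp] using hq)
  · have hqp : q ≠ p := by rintro rfl; simp at hq
    simp only [Function.update_of_ne hqp] at hq ⊢
    exact hc.of_wait_false q hq
  · by_cases hqp : q = p
    · subst hqp; simp [inCS]
    · simpa [inCS, Function.update_of_ne hqp] using hc.of_mem_V q hq

theorem deq {r : Option (Fin N)} (hc : GInv c) (h : GStep N c (GEv.deq p r) c') :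
    GInv c' := by
  cases h with | deq _ _ hcs hhead _ hr => ?_
  obtain ⟨t, hQ⟩ := List.head?_eq_some_iff.mp hhead
  obtain ⟨hpt, ht⟩ := List.nodup_cons.mp (hQ ▸ hc.nodup)
  have hWait := hc.wait_eq_true_of_inCS hcs
  have hcleared : ∀ q, (match r with
      | some q => Function.update c.Wait q false
      | none => c.Wait) q = false → t.head? = some q ∧ c.phase q = GPhase.wait := by
    intro q hq
    obtain rfl : r = some q := by
      rcases r with _ | a
      · simp [hWait] at hq
      · by_cases hqa : q = a
        · rw [hqa]
        · simp [Function.update_of_ne hqa, hWait] at hq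
    rw [hQ, List.getElem?_cons_succ, ← List.head?_eq_getElem?] at hr
    obtain ⟨hqhead, hqV⟩ : t.head? = some q ∧ q ∈ c.V := by
      split at hr
      · split_ifs at hr with haV
        obtain rfl := Option.some_inj.mp hr
        exact ⟨‹_›, haV⟩
      · cases hr
    refine ⟨hqhead, hc.phase_eq_wait_of_mem_V hqV hhead ?_⟩
    rintro rfl
    exact hpt (List.mem_of_mem_head? hqhead)
  refine ⟨by simpa [hQ] using ht, fun q hq => ?_, fun q hq => ?_, fun q hq => ?_,
    fun q hq => ?_⟩
  · simp only [hQ, List.tail_cons] at hq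
    refine ⟨?_, Bool.not_eq_false _ ▸ fun hW => hq (List.mem_of_mem_head? (hcleared q hW).1)⟩
    by_cases hqp : q = p
    · simp [hqp]
    · simpa [Function.update_of_ne hqp] using (hc.of_not_mem_Q q (by simp [hQ, hqp, hq])).1
  · have hqp : q ≠ p := by rintro rfl; simp [inCS] at hq
    have := hc.head_of_inCS q (by simpa [inCS, Function.update_of_ne hqp] using hq)
    exact (hqp (Option.some_inj.mp (this.symm.trans hhead))).elim
  · obtain ⟨hqhead, hwait⟩ := hcleared q hq
    have hqp : q ≠ p := by rintro rfl; exact hpt (List.mem_of_mem_head? hqhead)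
    simpa [hQ, Function.update_of_ne hqp] using ⟨hqhead, hwait⟩
  · obtain ⟨hqp, hqV⟩ := Finset.mem_erase.mp hq
    simpa [inCS, Function.update_of_ne hqp] using hc.of_mem_V q hqV

theorem step {e : GEv N} (hc : GInv c) (h : GStep N c e c') : GInv c' := by
  cases e with
  | enq p => exact hc.enq h
  | isHeadT p =>
    cases h with
    | isHeadT _ hph hpQ _ hhead => exact hc.isHead hph hpQ _ (.inr ⟨rfl, hhead⟩)
  | isHeadF p =>
    cases h with
    | isHeadF _ hph hpQ _ _ => exact hc.isHead hph hpQ _ (.inl rfl)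
  | exitWait p => exact hc.exitWait h
  | deq p r => exact hc.deq h

theorem of_reaches {H : List (GEv N)} (hc : GInv c) (hrun : GReaches N c H c') : GInv c' := by
  induction hrun with
  | nil => exact hc
  | cons hstep _ ih => exact ih (hc.step hstep)

end GInv

/-- Invariant 1 part (c): in every reachable configuration of Algorithm GQME, a process
not in the queue of M is in phase NEAR_NCS and its Wait register is true. -/
theorem invariant_part_c (N : ℕ) (H : List (GEv N)) (c : GConfig N)
    (hrun : GReaches N (gInit N) H c) (p : Fin N) (hp : p ∉ c.Q) :
    c.phase p = GPhase.nearNCS ∧ c.Wait p = true :=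
  ((GInv.init N).of_reaches hrun).of_not_mem_Q p hp
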